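/- arXiv:1506.08241 — 6 statements merged into one kernel-verified Lean document; each statement's English description precedes it below -/
import Mathlib

section
/- Let 0 < s < 1 and η₁ ∈ [s²/(1+s²), 1/(1+s²)], η₂ = 1 − η₁. Then the minimum of η₁q₁ + η₂q₂ over (q₁,q₂) ∈ [0,1]² with q₁q₂ ≥ s² equals 2√(η₁η₂)·s, attained at (q₁,q₂) = (√(η₂/η₁)·s, √(η₁/η₂)·s). -/
/-!
The lower bound is AM–GM: if `q₁ q₂ ≥ s²` then
`a q₁ + b q₂ ≥ 2 √(a q₁) √(b q₂) ≥ 2 √(a b) s`, with equality when `a q₁ = b q₂` and `q₁ q₂ = s²`,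
i.e. at `(q₁, q₂) = (√(b/a) s, √(a/b) s)`. The prior interval for `η₁` says exactly that this
point lies in the unit square.
-/

open Real Set

theorem two_mul_sqrt_mul_mul_le_add {a b q₁ q₂ s : ℝ} (ha : 0 ≤ a) (hb : 0 ≤ b)
    (hq₁ : 0 ≤ q₁) (hq₂ : 0 ≤ q₂) (h : s ^ 2 ≤ q₁ * q₂) :
    2 * √(a * b) * s ≤ a * q₁ + b * q₂ := by
  have hs : s ≤ √(q₁ * q₂) := (le_abs_self s).trans (abs_le_sqrt h)
  have hsplit : √(a * b) * √(q₁ * q₂) = √(a * q₁) * √(b * q₂) := by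
    rw [← sqrt_mul (by positivity), ← sqrt_mul (by positivity)]
    ring_nf
  calc 2 * √(a * b) * s ≤ 2 * (√(a * b) * √(q₁ * q₂)) := by
        rw [mul_assoc]; gcongr
    _ = 2 * √(a * q₁) * √(b * q₂) := by rw [hsplit, mul_assoc]
    _ ≤ √(a * q₁) ^ 2 + √(b * q₂) ^ 2 := two_mul_le_add_sq _ _
    _ = a * q₁ + b * q₂ := by rw [sq_sqrt (by positivity), sq_sqrt (by positivity)]

theorem mul_sqrt_div_self {a : ℝ} (ha : 0 ≤ a) (b : ℝ) : a * √(b / a) = √(a * b) := by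
  rcases ha.eq_or_lt with rfl | ha
  · simp
  · rw [← sqrt_mul_self ha.le, ← sqrt_mul (mul_self_nonneg a), sqrt_mul_self ha.le]
    field_simp

theorem sqrt_div_mul_sqrt_div {a b : ℝ} (ha : 0 < a) (hb : 0 < b) : √(b / a) * √(a / b) = 1 := by
  rw [← sqrt_mul (by positivity), div_mul_div_comm, mul_comm b a, div_self (by positivity),
    sqrt_one]

theorem sqrt_div_mul_mem_Icc {a b s : ℝ} (ha : 0 < a) (hs : 0 ≤ s) (h : b * s ^ 2 ≤ a) :
    √(b / a) * s ∈ Icc (0 : ℝ) 1 := by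
  refine ⟨by positivity, ?_⟩
  rwa [← sqrt_sq hs, ← sqrt_mul' _ (sq_nonneg s), sqrt_le_one, div_mul_eq_mul_div, div_le_one ha]

theorem sqrt_div_mul_mul_sqrt_div_mul {a b : ℝ} (ha : 0 < a) (hb : 0 < b) (s : ℝ) :
    √(b / a) * s * (√(a / b) * s) = s ^ 2 := by
  rw [mul_mul_mul_comm, sqrt_div_mul_sqrt_div ha hb, one_mul, sq]

theorem mul_sqrt_div_mul_add_mul_sqrt_div_mul {a b : ℝ} (ha : 0 ≤ a) (hb : 0 ≤ b) (s : ℝ) :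
    a * (√(b / a) * s) + b * (√(a / b) * s) = 2 * √(a * b) * s := by
  rw [← mul_assoc, ← mul_assoc, mul_sqrt_div_self ha, mul_sqrt_div_self hb, mul_comm b a]
  ring

theorem isLeast_weighted_sum_of_mul_ge_sq {a b s : ℝ} (ha : 0 < a) (hb : 0 < b) (hs : 0 ≤ s)
    (hba : b * s ^ 2 ≤ a) (hab : a * s ^ 2 ≤ b) :
    IsLeast {Q : ℝ | ∃ q₁ q₂ : ℝ, q₁ ∈ Icc (0 : ℝ) 1 ∧ q₂ ∈ Icc (0 : ℝ) 1 ∧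
        q₁ * q₂ ≥ s ^ 2 ∧ Q = a * q₁ + b * q₂} (2 * √(a * b) * s) := by
  refine ⟨⟨√(b / a) * s, √(a / b) * s, sqrt_div_mul_mem_Icc ha hs hba,
    sqrt_div_mul_mem_Icc hb hs hab, (sqrt_div_mul_mul_sqrt_div_mul ha hb s).ge,
    (mul_sqrt_div_mul_add_mul_sqrt_div_mul ha.le hb.le s).symm⟩, ?_⟩
  rintro Q ⟨q₁, q₂, hq₁, hq₂, hprod, rfl⟩
  exact two_mul_sqrt_mul_mul_le_add ha.le hb.le hq₁.1 hq₂.1 hprod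

theorem mem_Icc_sq_div_one_add_sq_iff {s η₁ η₂ : ℝ} (hη : η₂ = 1 - η₁) :
    η₁ ∈ Icc (s ^ 2 / (1 + s ^ 2)) (1 / (1 + s ^ 2)) ↔ η₂ * s ^ 2 ≤ η₁ ∧ η₁ * s ^ 2 ≤ η₂ := by
  have h : 0 < 1 + s ^ 2 := by positivity
  rw [mem_Icc, div_le_iff₀ h, le_div_iff₀ h, hη]
  constructor <;> rintro ⟨h₁, h₂⟩ <;> constructor <;> linarith

theorem stmt4_general (s η₁ η₂ : ℝ) (hs0 : 0 < s)
    (hη₁ : η₁ ∈ Set.Icc (s^2/(1+s^2)) (1/(1+s^2))) (hη₂ : η₂ = 1 - η₁) :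
    IsLeast {Q : ℝ | ∃ q₁ q₂ : ℝ, q₁ ∈ Set.Icc (0:ℝ) 1 ∧ q₂ ∈ Set.Icc (0:ℝ) 1 ∧
        q₁ * q₂ ≥ s^2 ∧ Q = η₁ * q₁ + η₂ * q₂} (2 * Real.sqrt (η₁ * η₂) * s) ∧
    Real.sqrt (η₂/η₁) * s ∈ Set.Icc (0:ℝ) 1 ∧
    Real.sqrt (η₁/η₂) * s ∈ Set.Icc (0:ℝ) 1 ∧
    (Real.sqrt (η₂/η₁) * s) * (Real.sqrt (η₁/η₂) * s) ≥ s^2 ∧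
    η₁ * (Real.sqrt (η₂/η₁) * s) + η₂ * (Real.sqrt (η₁/η₂) * s)
      = 2 * Real.sqrt (η₁ * η₂) * s := by
  obtain ⟨h₂₁, h₁₂⟩ := (mem_Icc_sq_div_one_add_sq_iff hη₂).1 hη₁
  have hs2 : 0 < s ^ 2 := by positivity
  have hη₁pos : 0 < η₁ := by nlinarith
  have hη₂pos : 0 < η₂ := by nlinarith
  exact ⟨isLeast_weighted_sum_of_mul_ge_sq hη₁pos hη₂pos hs0.le h₂₁ h₁₂,
    sqrt_div_mul_mem_Icc hη₁pos hs0.le h₂₁, sqrt_div_mul_mem_Icc hη₂pos hs0.le h₁₂,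
    (sqrt_div_mul_mul_sqrt_div_mul hη₁pos hη₂pos s).ge,
    mul_sqrt_div_mul_add_mul_sqrt_div_mul hη₁pos.le hη₂pos.le s⟩

theorem stmt4 (s η₁ η₂ : ℝ) (hs0 : 0 < s) (hs1 : s < 1)
    (hη₁ : η₁ ∈ Set.Icc (s^2/(1+s^2)) (1/(1+s^2))) (hη₂ : η₂ = 1 - η₁) :
    IsLeast {Q : ℝ | ∃ q₁ q₂ : ℝ, q₁ ∈ Set.Icc (0:ℝ) 1 ∧ q₂ ∈ Set.Icc (0:ℝ) 1 ∧
        q₁ * q₂ ≥ s^2 ∧ Q = η₁ * q₁ + η₂ * q₂} (2 * Real.sqrt (η₁ * η₂) * s) ∧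
    Real.sqrt (η₂/η₁) * s ∈ Set.Icc (0:ℝ) 1 ∧
    Real.sqrt (η₁/η₂) * s ∈ Set.Icc (0:ℝ) 1 ∧
    (Real.sqrt (η₂/η₁) * s) * (Real.sqrt (η₁/η₂) * s) ≥ s^2 ∧
    η₁ * (Real.sqrt (η₂/η₁) * s) + η₂ * (Real.sqrt (η₁/η₂) * s)
      = 2 * Real.sqrt (η₁ * η₂) * s :=
  stmt4_general s η₁ η₂ hs0 hη₁ hη₂
end

section
/- Let 0 < s < 1 and 0 ≤ η₁ ≤ s²/(1+s²), η₂ = 1 − η₁. Then the minimum of η₁q₁ + η₂q₂ over (q₁,q₂) ∈ [0,1]² with q₁q₂ ≥ s² equals η₁ + η₂s², attained at (q₁,q₂) = (1, s²). -/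
theorem stmt5 (s η₁ η₂ : ℝ) (hs0 : 0 < s) (hs1 : s < 1)
    (hη₁ : η₁ ∈ Set.Icc (0:ℝ) (s^2/(1+s^2))) (hη₂ : η₂ = 1 - η₁) :
    IsLeast {Q : ℝ | ∃ q₁ q₂ : ℝ, q₁ ∈ Set.Icc (0:ℝ) 1 ∧ q₂ ∈ Set.Icc (0:ℝ) 1 ∧
        q₁ * q₂ ≥ s^2 ∧ Q = η₁ * q₁ + η₂ * q₂} (η₁ + η₂ * s^2) ∧
    η₁ * 1 + η₂ * s^2 = η₁ + η₂ * s^2 ∧ (1:ℝ) * s^2 ≥ s^2 := by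
  obtain ⟨hη₁0, hη₁u⟩ := hη₁
  have hpos : (0:ℝ) < 1 + s^2 := by positivity
  have hkey : η₁ * (1 + s^2) ≤ s^2 := by
    rw [le_div_iff₀ hpos] at hη₁u
    linarith
  refine ⟨⟨⟨1, s^2, ⟨zero_le_one, le_refl 1⟩, ⟨by positivity, by nlinarith⟩,
      by nlinarith, by ring⟩, ?_⟩, by ring, by nlinarith⟩
  rintro Q ⟨q₁, q₂, ⟨hq₁0, hq₁1⟩, ⟨hq₂0, hq₂1⟩, hprod, rfl⟩
  have hq₁pos : 0 < q₁ := by nlinarith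
  subst hη₂
  have h1 : 0 ≤ (1 - q₁) * ((1 - η₁) * s^2 - η₁ * q₁) := by
    apply mul_nonneg (by linarith)
    nlinarith
  have h2 : 0 ≤ (1 - η₁) * (q₁ * q₂ - s^2) := by
    apply mul_nonneg (by nlinarith) (by linarith)
  nlinarith [mul_pos hq₁pos hq₁pos]
end

section
/- The line v = u is the envelope of the family of ellipses parametrized by u(θ) = Q cosθ/√(1−Δ²), v(θ) = Q(1 + Δsinθ)/(1−Δ²) (Q > 0 varying): for every point on any such ellipse, v ≥ u, and for each Q there is exactly one θ ∈ (−π/2, π/2) achieving v = u. -/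
open Real in
theorem stmt11 (Δ : ℝ) (hΔ : Δ ∈ Set.Ioo (0:ℝ) 1) (Q : ℝ) (hQ : 0 < Q) :
    (∀ θ : ℝ, Q * (1 + Δ * Real.sin θ) / (1 - Δ^2)
        ≥ Q * Real.cos θ / Real.sqrt (1 - Δ^2)) ∧
    ∃! θ : ℝ, θ ∈ Set.Ioo (-(π/2)) (π/2) ∧
      Q * (1 + Δ * Real.sin θ) / (1 - Δ^2) = Q * Real.cos θ / Real.sqrt (1 - Δ^2) := by
  obtain ⟨hΔ0, hΔ1⟩ := hΔ
  have h1 : (0:ℝ) < 1 - Δ^2 := by nlinarith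
  set s : ℝ := Real.sqrt (1 - Δ^2) with hs_def
  have hs0 : 0 < s := Real.sqrt_pos.mpr h1
  have hs2 : s^2 = 1 - Δ^2 := Real.sq_sqrt h1.le
  have key : ∀ θ : ℝ, 1 + Δ * Real.sin θ - s * Real.cos θ ≥ 0 := by
    intro θ
    nlinarith [sq_nonneg (Real.sin θ + Δ), sq_nonneg (Real.cos θ - s),
      Real.sin_sq_add_cos_sq θ]
  constructor
  · intro θ
    rw [ge_iff_le, div_le_div_iff₀ hs0 h1, ← hs2]
    nlinarith [mul_nonneg (mul_nonneg hQ.le hs0.le) (key θ)]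
  · refine ⟨-Real.arcsin Δ, ⟨⟨?_, ?_⟩, ?_⟩, ?_⟩
    · exact neg_lt_neg (Real.arcsin_lt_pi_div_two.mpr hΔ1)
    · have := Real.arcsin_pos.mpr hΔ0
      linarith [Real.pi_div_two_pos]
    · have hsin : Real.sin (-Real.arcsin Δ) = -Δ := by
        rw [Real.sin_neg, Real.sin_arcsin (by linarith) hΔ1.le]
      have hcos : Real.cos (-Real.arcsin Δ) = s := by
        rw [Real.cos_neg, Real.cos_arcsin]
      rw [hsin, hcos]
      rw [div_eq_div_iff h1.ne' hs0.ne']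
      nlinarith
    · rintro θ ⟨⟨hθ1, hθ2⟩, heq⟩
      rw [div_eq_div_iff h1.ne' hs0.ne', ← hs2] at heq
      have hzero : 1 + Δ * Real.sin θ - s * Real.cos θ = 0 := by
        nlinarith [key θ, mul_pos hQ hs0]
      have hsin : Real.sin θ = -Δ := by
        nlinarith [sq_nonneg (Real.sin θ + Δ), sq_nonneg (Real.cos θ - s),
          Real.sin_sq_add_cos_sq θ]
      have : Real.arcsin (Real.sin θ) = Real.arcsin (-Δ) := by rw [hsin]
      rw [Real.arcsin_sin hθ1.le hθ2.le, Real.arcsin_neg] at this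
      exact this
end

section
/- Let 0 ≤ s' < s < 1 and define the 3×3 real matrix U with rows (√((1−s)/(1−s')), −(s−s')/√((1−s')(1+s)), −√((1+s')(s−s')/((1−s')(1+s)))), (0, √((1+s')/(1+s)), −√((s−s')/(1+s))), (√((s−s')/(1−s')), √((1−s)(s−s')/((1+s)(1−s'))), √((1−s)(1+s')/((1−s')(1+s)))). Then U is orthogonal (UᵀU = I). -/
/-!
`U` is the product `R_xz(θ) * R_yz(φ)` of two plane rotations with
`cos θ = √((1-s)/(1-s'))`, `sin θ = √((s-s')/(1-s'))`, `cos φ = √((1+s')/(1+s))` and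
`sin φ = √((s-s')/(1+s))`; the Pythagorean identities for these angles are just
`(1-s) + (s-s') = 1-s'` and `(1+s') + (s-s') = 1+s`.
-/

namespace Matrix

variable {R : Type*} [CommRing R]

def rotationXZ (c σ : R) : Matrix (Fin 3) (Fin 3) R := !![c, 0, -σ; 0, 1, 0; σ, 0, c]

def rotationYZ (c σ : R) : Matrix (Fin 3) (Fin 3) R := !![1, 0, 0; 0, c, -σ; 0, σ, c]

theorem rotationXZ_mem_orthogonalGroup {c σ : R} (h : c ^ 2 + σ ^ 2 = 1) :
    rotationXZ c σ ∈ orthogonalGroup (Fin 3) R := by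
  rw [mem_orthogonalGroup_iff']
  ext i j
  fin_cases i <;> fin_cases j <;> simp [rotationXZ, mul_apply, Fin.sum_univ_succ] <;> grind

theorem rotationYZ_mem_orthogonalGroup {c σ : R} (h : c ^ 2 + σ ^ 2 = 1) :
    rotationYZ c σ ∈ orthogonalGroup (Fin 3) R := by
  rw [mem_orthogonalGroup_iff']
  ext i j
  fin_cases i <;> fin_cases j <;> simp [rotationYZ, mul_apply, Fin.sum_univ_succ] <;> grind

end Matrix

namespace Real

theorem sq_sqrt_div_add_sq_sqrt_div {x y z : ℝ} (hx : 0 ≤ x) (hy : 0 ≤ y) (hz : x + y = z)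
    (hz0 : z ≠ 0) : √(x / z) ^ 2 + √(y / z) ^ 2 = 1 := by
  have : 0 ≤ z := hz ▸ add_nonneg hx hy
  rw [sq_sqrt (div_nonneg hx this), sq_sqrt (div_nonneg hy this), ← add_div, hz, div_self hz0]

theorem sqrt_mul_sqrt_of_mul_eq {x y z : ℝ} (hx : 0 ≤ x) (h : x * y = z) : √x * √y = √z :=
  h ▸ (sqrt_mul hx y).symm

end Real

open Matrix Real

theorem stmt16 (s s' : ℝ) (h0 : 0 ≤ s') (h1 : s' < s) (h2 : s < 1) :
    let U : Matrix (Fin 3) (Fin 3) ℝ := !![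
      Real.sqrt ((1-s)/(1-s')), -(s-s')/Real.sqrt ((1-s')*(1+s)),
        -Real.sqrt ((1+s')*(s-s')/((1-s')*(1+s)));
      0, Real.sqrt ((1+s')/(1+s)), -Real.sqrt ((s-s')/(1+s));
      Real.sqrt ((s-s')/(1-s')), Real.sqrt ((1-s)*(s-s')/((1+s)*(1-s'))),
        Real.sqrt ((1-s)*(1+s')/((1-s')*(1+s)))]
    U.transpose * U = 1 := by
  intro U
  have hp : 0 ≤ 1 - s := by linarith
  have hq : 0 < 1 + s := by linarith
  have hr : 0 < 1 - s' := by linarith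
  have ht : 0 ≤ 1 + s' := by linarith
  have hc : 0 ≤ s - s' := by linarith
  have e01 : √((s-s')/(1-s')) * √((s-s')/(1+s)) = (s-s')/√((1-s')*(1+s)) := by
    rw [sqrt_mul_sqrt_of_mul_eq (div_nonneg hc hr.le) (z := ((s-s')/√((1-s')*(1+s))) ^ 2),
      sqrt_sq (by positivity)]
    rw [div_pow, sq_sqrt (by positivity), div_mul_div_comm, sq]
  have e02 : √((s-s')/(1-s')) * √((1+s')/(1+s)) = √((1+s')*(s-s')/((1-s')*(1+s))) :=
    sqrt_mul_sqrt_of_mul_eq (div_nonneg hc hr.le) (by rw [div_mul_div_comm, mul_comm (s-s')])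
  have e21 : √((1-s)/(1-s')) * √((s-s')/(1+s)) = √((1-s)*(s-s')/((1+s)*(1-s'))) :=
    sqrt_mul_sqrt_of_mul_eq (div_nonneg hp hr.le) (by rw [div_mul_div_comm, mul_comm (1-s')])
  have e22 : √((1-s)/(1-s')) * √((1+s')/(1+s)) = √((1-s)*(1+s')/((1-s')*(1+s))) :=
    sqrt_mul_sqrt_of_mul_eq (div_nonneg hp hr.le) (div_mul_div_comm _ _ _ _)
  have hU : U = rotationXZ √((1-s)/(1-s')) √((s-s')/(1-s'))
      * rotationYZ √((1+s')/(1+s)) √((s-s')/(1+s)) := by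
    ext i j
    fin_cases i <;> fin_cases j <;>
      simp [U, rotationXZ, rotationYZ, mul_apply, Fin.sum_univ_succ, e01, e02, e21, e22]
    ring
  rw [hU, ← mem_orthogonalGroup_iff']
  exact mul_mem
    (rotationXZ_mem_orthogonalGroup (sq_sqrt_div_add_sq_sqrt_div hp hc (by ring) hr.ne'))
    (rotationYZ_mem_orthogonalGroup (sq_sqrt_div_add_sq_sqrt_div ht hc (by ring) hq.ne'))
end

section
/- Let 0 ≤ s' < s < 1 and Q = (s−s')/(1−s'), p = 1 − Q. With U the 3×3 separation matrix, e₁ = (1,0,0), the vector U·e₁ equals √p·(1,0,0) + √Q·(0,0,1), and U·(s, √(1−s²), 0) equals √p·(s', √(1−s'²), 0) + √Q·(0,0,1). -/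
/-!
Every entry of `U` is a quotient of products of the square roots `√(1 - s)`, `√(1 + s)`,
`√(1 - s')`, `√(1 + s')` and `√(s - s')`, and so are `√p = √(1 - s) / √(1 - s')` and
`√Q = √(s - s') / √(1 - s')`. In these roots both identities are rational identities whose
only non-formal ingredient is `√(1 - s) ^ 2 = 1 - s`.
-/

open Real Matrix

/-- With `a, b, c, d, e` standing for `√(1 - s), √(1 + s), √(1 - s'), √(1 + s'), √(s - s')`,
this is the matrix `U`. -/
noncomputable def separationMatrix (s s' a b c d e : ℝ) : Matrix (Fin 3) (Fin 3) ℝ :=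
  !![a / c, -(s - s') / (c * b), -(d * e / (c * b));
     0, d / b, -(e / b);
     e / c, a * e / (b * c), a * d / (c * b)]

section separationMatrix

variable {s s' a b c d e : ℝ}

theorem separationMatrix_mulVec_e₁ :
    separationMatrix s s' a b c d e *ᵥ ![1, 0, 0]
      = (a / c) • ![1, 0, 0] + (e / c) • ![0, 0, 1] := by
  ext i; fin_cases i <;> simp [separationMatrix]

theorem separationMatrix_mulVec_ψ₂ (ha : a ^ 2 = 1 - s) (hb : b ≠ 0) (hc : c ≠ 0) :
    separationMatrix s s' a b c d e *ᵥ ![s, a * b, 0]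
      = (a / c) • ![s', c * d, 0] + (e / c) • ![0, 0, 1] := by
  ext i; fin_cases i <;> simp [separationMatrix, mulVec, dotProduct, Fin.sum_univ_three]
  · field_simp; ring
  · field_simp
  · field_simp; linear_combination e * ha

end separationMatrix

theorem sqrt_one_sub_sq_eq_mul {x : ℝ} (hx : x ≤ 1) : √(1 - x ^ 2) = √(1 - x) * √(1 + x) := by
  rw [← sqrt_mul (by linarith)]; ring_nf

theorem stmt18 (s s' : ℝ) (h0 : 0 ≤ s') (h1 : s' < s) (h2 : s < 1) :
    let Q := (s - s') / (1 - s')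
    let p := 1 - Q
    let U : Matrix (Fin 3) (Fin 3) ℝ := !![
      Real.sqrt ((1-s)/(1-s')), -(s-s')/Real.sqrt ((1-s')*(1+s)),
        -Real.sqrt ((1+s')*(s-s')/((1-s')*(1+s)));
      0, Real.sqrt ((1+s')/(1+s)), -Real.sqrt ((s-s')/(1+s));
      Real.sqrt ((s-s')/(1-s')), Real.sqrt ((1-s)*(s-s')/((1+s)*(1-s'))),
        Real.sqrt ((1-s)*(1+s')/((1-s')*(1+s)))]
    U.mulVec ![1, 0, 0] = Real.sqrt p • ![1, 0, 0] + Real.sqrt Q • ![0, 0, 1] ∧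
    U.mulVec ![s, Real.sqrt (1 - s^2), 0]
      = Real.sqrt p • ![s', Real.sqrt (1 - s'^2), 0] + Real.sqrt Q • ![0, 0, 1] := by
  intro Q p U
  have hs : 0 < 1 - s := by linarith
  have hs' : 0 < 1 - s' := by linarith
  have ht : 0 < 1 + s := by linarith
  have hd : 0 < s - s' := by linarith
  have hU : U = separationMatrix s s' √(1 - s) √(1 + s) √(1 - s') √(1 + s') √(s - s') := by
    simp only [U, separationMatrix, neg_div]
    simp (disch := positivity) only [sqrt_div, sqrt_mul]
  have hQ : √Q = √(s - s') / √(1 - s') := sqrt_div hd.le _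
  have hp : √p = √(1 - s) / √(1 - s') := by
    rw [← sqrt_div hs.le]; congr 1; simp only [p, Q]; field_simp; ring
  rw [hU, hQ, hp, sqrt_one_sub_sq_eq_mul h2.le, sqrt_one_sub_sq_eq_mul (h1.trans h2).le]
  exact ⟨separationMatrix_mulVec_e₁,
    separationMatrix_mulVec_ψ₂ (sq_sqrt hs.le) (sqrt_pos.2 ht).ne' (sqrt_pos.2 hs').ne'⟩
end

section
/- Let 0 < s < 1, β ∈ (0, s], and priors η₁, η₂ > 0 with η₁ + η₂ = 1. Then the minimum of η₁q₁ + η₂q₂ over the compact convex set S_β = {(q₁,q₂) ∈ [0,1]² : √((1−q₁)(1−q₂))β + √(q₁q₂) ≥ s} is attained at a unique point. -/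
private lemma sqrt_aux_le {a b c d : ℝ} (ha : 0 ≤ a) (hb : 0 ≤ b) (hc : 0 ≤ c) (hd : 0 ≤ d) :
    Real.sqrt (a*b) + Real.sqrt (c*d) ≤ Real.sqrt ((a+c)*(b+d)) := by
  rw [Real.le_sqrt (by positivity) (by positivity)]
  have h1 := Real.sq_sqrt (mul_nonneg ha hb)
  have h2 := Real.sq_sqrt (mul_nonneg hc hd)
  have h3 : Real.sqrt (a*b) * Real.sqrt (c*d) = Real.sqrt (a*d) * Real.sqrt (b*c) := by
    rw [← Real.sqrt_mul (mul_nonneg ha hb), ← Real.sqrt_mul (mul_nonneg ha hd)]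
    ring_nf
  have h4 := Real.sq_sqrt (mul_nonneg ha hd)
  have h5 := Real.sq_sqrt (mul_nonneg hb hc)
  nlinarith [sq_nonneg (Real.sqrt (a*d) - Real.sqrt (b*c))]

private lemma sqrt_aux_eq {a b c d : ℝ} (ha : 0 ≤ a) (hb : 0 ≤ b) (hc : 0 ≤ c) (hd : 0 ≤ d)
    (heq : Real.sqrt (a*b) + Real.sqrt (c*d) = Real.sqrt ((a+c)*(b+d))) : a*d = b*c := by
  have hsq : (Real.sqrt (a*b) + Real.sqrt (c*d))^2 = (a+c)*(b+d) := by
    rw [heq, Real.sq_sqrt (by positivity)]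
  have h1 := Real.sq_sqrt (mul_nonneg ha hb)
  have h2 := Real.sq_sqrt (mul_nonneg hc hd)
  have h3 : Real.sqrt (a*b) * Real.sqrt (c*d) = Real.sqrt (a*d) * Real.sqrt (b*c) := by
    rw [← Real.sqrt_mul (mul_nonneg ha hb), ← Real.sqrt_mul (mul_nonneg ha hd)]
    ring_nf
  have h4 := Real.sq_sqrt (mul_nonneg ha hd)
  have h5 := Real.sq_sqrt (mul_nonneg hb hc)
  have hz : (Real.sqrt (a*d) - Real.sqrt (b*c))^2 = 0 := by nlinarith
  have : Real.sqrt (a*d) = Real.sqrt (b*c) := by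
    have := pow_eq_zero_iff (n := 2) (by norm_num) |>.mp hz
    linarith [sub_eq_zero.mp this]
  nlinarith

private lemma mid_le {a b c d : ℝ} (ha : 0 ≤ a) (hb : 0 ≤ b) (hc : 0 ≤ c) (hd : 0 ≤ d) :
    Real.sqrt (a*b) + Real.sqrt (c*d) ≤ 2 * Real.sqrt ((a+c)/2 * ((b+d)/2)) := by
  have h : (a+c)/2 * ((b+d)/2) = ((a+c)*(b+d))/4 := by ring
  rw [h, Real.sqrt_div (by positivity), show Real.sqrt 4 = 2 by
    rw [show (4:ℝ) = 2^2 by norm_num, Real.sqrt_sq (by norm_num)]]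
  have := sqrt_aux_le ha hb hc hd
  linarith

private lemma mid_eq {a b c d : ℝ} (ha : 0 ≤ a) (hb : 0 ≤ b) (hc : 0 ≤ c) (hd : 0 ≤ d)
    (heq : Real.sqrt (a*b) + Real.sqrt (c*d) = 2 * Real.sqrt ((a+c)/2 * ((b+d)/2))) :
    a*d = b*c := by
  apply sqrt_aux_eq ha hb hc hd
  have h : (a+c)/2 * ((b+d)/2) = ((a+c)*(b+d))/4 := by ring
  rw [h, Real.sqrt_div (by positivity), show Real.sqrt 4 = 2 by
    rw [show (4:ℝ) = 2^2 by norm_num, Real.sqrt_sq (by norm_num)]] at heq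
  linarith

private lemma perturb1 {s β : ℝ} (_hβ0 : 0 < β) {x y : ℝ} (hx : 0 < x)
    (h : s < Real.sqrt ((1-x)*(1-y))*β + Real.sqrt (x*y)) :
    ∃ x', 0 ≤ x' ∧ x' < x ∧ s ≤ Real.sqrt ((1-x')*(1-y))*β + Real.sqrt (x'*y) := by
  have hc : ContinuousAt (fun t => Real.sqrt ((1-t)*(1-y))*β + Real.sqrt (t*y)) x := by fun_prop
  have hev := hc.eventually (eventually_gt_nhds h)
  rw [Metric.eventually_nhds_iff] at hev
  obtain ⟨ε, hε, hball⟩ := hev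
  refine ⟨max 0 (x - ε/2), le_max_left _ _, ?_, ?_⟩
  · apply max_lt hx; linarith
  · apply le_of_lt
    apply hball
    rw [Real.dist_eq, abs_lt]
    constructor
    · have := le_max_right 0 (x - ε/2); linarith
    · have : max 0 (x - ε/2) < x := max_lt hx (by linarith)
      linarith

set_option maxHeartbeats 1000000 in
theorem stmt19 (s β η₁ η₂ : ℝ) (hs0 : 0 < s) (hs1 : s < 1)
    (hβ : β ∈ Set.Ioc (0:ℝ) s) (hη₁ : 0 < η₁) (hη₂ : 0 < η₂) (hsum : η₁ + η₂ = 1) :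
    let Sβ : Set (ℝ × ℝ) := {q : ℝ × ℝ | q.1 ∈ Set.Icc (0:ℝ) 1 ∧ q.2 ∈ Set.Icc (0:ℝ) 1 ∧
      Real.sqrt ((1 - q.1) * (1 - q.2)) * β + Real.sqrt (q.1 * q.2) ≥ s}
    ∃! q : ℝ × ℝ, q ∈ Sβ ∧ ∀ p ∈ Sβ, η₁ * q.1 + η₂ * q.2 ≤ η₁ * p.1 + η₂ * p.2 := by
  intro Sβ
  obtain ⟨hβ0, hβs⟩ := hβ
  have hfc : Continuous (fun q : ℝ × ℝ =>
      Real.sqrt ((1 - q.1) * (1 - q.2)) * β + Real.sqrt (q.1 * q.2)) := by fun_prop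
  have hSeq : Sβ = (Set.Icc (0:ℝ) 1 ×ˢ Set.Icc (0:ℝ) 1) ∩
      (fun q : ℝ × ℝ => Real.sqrt ((1 - q.1) * (1 - q.2)) * β + Real.sqrt (q.1 * q.2))
      ⁻¹' (Set.Ici s) := by
    ext x
    simp only [Sβ, Set.mem_setOf_eq, Set.mem_inter_iff, Set.mem_prod, Set.mem_preimage,
      Set.mem_Ici, ge_iff_le]
    tauto
  have hcomp : IsCompact Sβ := by
    rw [hSeq]
    exact (isCompact_Icc.prod isCompact_Icc).inter_right (isClosed_Ici.preimage hfc)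
  have hne : Sβ.Nonempty := by
    refine ⟨(1,1), Set.mem_Icc.mpr ⟨zero_le_one, le_refl 1⟩,
      Set.mem_Icc.mpr ⟨zero_le_one, le_refl 1⟩, ?_⟩
    show s ≤ Real.sqrt ((1-1)*(1-1)) * β + Real.sqrt (1*1)
    norm_num
    linarith
  obtain ⟨q, hqS, hqmin⟩ := hcomp.exists_isMinOn hne
    ((continuous_const.mul continuous_fst |>.add (continuous_const.mul continuous_snd)).continuousOn
      (s := Sβ))
  have hqmin' : ∀ x ∈ Sβ, η₁ * q.1 + η₂ * q.2 ≤ η₁ * x.1 + η₂ * x.2 := fun x hx => hqmin hx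
  refine ⟨q, ⟨hqS, hqmin'⟩, ?_⟩
  rintro p ⟨hpS, hpmin⟩
  by_contra hne'
  obtain ⟨⟨hp10, hp11⟩, ⟨hp20, hp21⟩, hpf⟩ := hpS
  obtain ⟨⟨hq10, hq11⟩, ⟨hq20, hq21⟩, hqf⟩ := hqS
  have hoeq : η₁ * p.1 + η₂ * p.2 = η₁ * q.1 + η₂ * q.2 :=
    le_antisymm (hpmin q ⟨Set.mem_Icc.mpr ⟨hq10, hq11⟩, Set.mem_Icc.mpr ⟨hq20, hq21⟩, hqf⟩)
      (hqmin' p ⟨Set.mem_Icc.mpr ⟨hp10, hp11⟩, Set.mem_Icc.mpr ⟨hp20, hp21⟩, hpf⟩)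
  set r1 : ℝ := (p.1+q.1)/2 with hr1def
  set r2 : ℝ := (p.2+q.2)/2 with hr2def
  have hr10 : 0 ≤ r1 := by rw [hr1def]; linarith
  have hr11 : r1 ≤ 1 := by rw [hr1def]; linarith
  have hr20 : 0 ≤ r2 := by rw [hr2def]; linarith
  have hr21 : r2 ≤ 1 := by rw [hr2def]; linarith
  set P' : ℝ := Real.sqrt ((1-p.1)*(1-p.2)) with hP'
  set Q' : ℝ := Real.sqrt ((1-q.1)*(1-q.2)) with hQ'
  set R' : ℝ := Real.sqrt ((1-r1)*(1-r2)) with hR'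
  set P : ℝ := Real.sqrt (p.1*p.2) with hP
  set Q : ℝ := Real.sqrt (q.1*q.2) with hQ
  set R : ℝ := Real.sqrt (r1*r2) with hR
  have hpf' : s ≤ P' * β + P := hpf
  have hqf' : s ≤ Q' * β + Q := hqf
  -- concavity inequalities
  have hA : P' + Q' ≤ 2 * R' := by
    have := mid_le (a := 1-p.1) (b := 1-p.2) (c := 1-q.1) (d := 1-q.2)
      (by linarith) (by linarith) (by linarith) (by linarith)
    have e1 : ((1-p.1)+(1-q.1))/2 = 1 - r1 := by rw [hr1def]; ring
    have e2 : ((1-p.2)+(1-q.2))/2 = 1 - r2 := by rw [hr2def]; ring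
    rw [e1, e2, ← hP', ← hQ', ← hR'] at this
    exact this
  have hB : P + Q ≤ 2 * R := by
    have := mid_le hp10 hp20 hq10 hq20
    rw [← hr1def, ← hr2def, ← hP, ← hQ, ← hR] at this
    exact this
  have hAg : 0 ≤ β * (2*R' - P' - Q') := mul_nonneg hβ0.le (by linarith)
  have hrf : s ≤ R' * β + R := by nlinarith [hAg, hB, hpf', hqf']
  have hrS : (r1, r2) ∈ Sβ :=
    ⟨Set.mem_Icc.mpr ⟨hr10, hr11⟩, Set.mem_Icc.mpr ⟨hr20, hr21⟩, hrf⟩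
  have horq : η₁ * r1 + η₂ * r2 = η₁ * q.1 + η₂ * q.2 := by
    rw [hr1def, hr2def]; linear_combination hoeq / 2
  rcases eq_or_lt_of_le hrf with hcase | hcase
  · -- equality case
    have hkey : β * (2*R' - P' - Q') + (2*R - P - Q) ≤ 0 := by
      have expand : β * (2*R' - P' - Q') + (2*R - P - Q)
          = 2*(R'*β + R) - (P'*β + P) - (Q'*β + Q) := by ring
      rw [expand, ← hcase]
      linarith
    have hBz : P + Q = 2*R := by linarith
    have hAz : P' + Q' = 2*R' := by
      rcases lt_or_eq_of_le hA with h | h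
      · exfalso
        have : 0 < β * (2*R' - P' - Q') := mul_pos hβ0 (by linarith)
        linarith
      · linarith
    have e1 : p.1 * q.2 = p.2 * q.1 := by
      apply mid_eq hp10 hp20 hq10 hq20
      rw [← hr1def, ← hr2def, ← hP, ← hQ, ← hR]
      exact hBz
    have e2 : (1-p.1) * (1-q.2) = (1-p.2) * (1-q.1) := by
      apply mid_eq (a := 1-p.1) (b := 1-p.2) (c := 1-q.1) (d := 1-q.2)
        (by linarith) (by linarith) (by linarith) (by linarith)
      have e1' : ((1-p.1)+(1-q.1))/2 = 1 - r1 := by rw [hr1def]; ring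
      have e2' : ((1-p.2)+(1-q.2))/2 = 1 - r2 := by rw [hr2def]; ring
      rw [e1', e2', ← hP', ← hQ', ← hR']
      exact hAz
    have hlin : p.1 + q.2 = p.2 + q.1 := by linear_combination e1 - e2
    have hd : (p.1 - p.2) * (p.1 - q.1) = 0 := by linear_combination p.1 * hlin - e1
    have hpq : p = q := by
      rcases mul_eq_zero.mp hd with h | h
      · have h12 : p.1 = p.2 := by linarith
        have h34 : q.1 = q.2 := by linarith
        have h1 : p.1 = q.1 := by
          linear_combination hoeq + η₂*h12 - η₂*h34 - (p.1-q.1)*hsum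
        exact Prod.ext h1 (by linarith)
      · have h1 : p.1 = q.1 := by linarith
        have h2 : p.2 = q.2 := by linarith
        exact Prod.ext h1 h2
    exact hne' hpq
  · -- strict case: perturbation
    have hrne : 0 < r1 ∨ 0 < r2 := by
      by_contra h
      push_neg at h
      have h1 : r1 = 0 := le_antisymm h.1 hr10
      have h2 : r2 = 0 := le_antisymm h.2 hr20
      rw [hr1def] at h1
      rw [hr2def] at h2
      exact hne' (Prod.ext (by linarith) (by linarith))
    rcases hrne with hpos | hpos
    · obtain ⟨x', hx0, hxlt, hxs⟩ := perturb1 (s := s) (y := r2) hβ0 hpos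
        (by rw [hR', hR] at hcase; exact hcase)
      have hmem : ((x', r2) : ℝ × ℝ) ∈ Sβ :=
        ⟨Set.mem_Icc.mpr ⟨hx0, by linarith⟩, Set.mem_Icc.mpr ⟨hr20, hr21⟩, hxs⟩
      have hle := hqmin' (x', r2) hmem
      simp only at hle
      have := mul_lt_mul_of_pos_left hxlt hη₁
      linarith
    · obtain ⟨y', hy0, hylt, hys⟩ := perturb1 (s := s) (y := r1) hβ0 hpos (by
        have comm : Real.sqrt ((1-r2)*(1-r1))*β + Real.sqrt (r2*r1) = R'*β + R := by
          rw [hR', hR, mul_comm (1-r2), mul_comm r2]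
        rw [comm]; exact hcase)
      have hys' : s ≤ Real.sqrt ((1-r1)*(1-y'))*β + Real.sqrt (r1*y') := by
        rw [mul_comm (1-r1), mul_comm r1]; exact hys
      have hmem : ((r1, y') : ℝ × ℝ) ∈ Sβ :=
        ⟨Set.mem_Icc.mpr ⟨hr10, hr11⟩, Set.mem_Icc.mpr ⟨hy0, by linarith⟩, hys'⟩
      have hle := hqmin' (r1, y') hmem
      simp only at hle
      have := mul_lt_mul_of_pos_left hylt hη₂
      linarith
end
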